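/- arXiv:2005.07542 — 3 statements merged into one kernel-verified Lean document; each statement's English description precedes it below -/
import Mathlib

section
/- Berge maximum theorem (argmax correspondence and value function): Let T : E ⇉ F be a continuous (upper and lower hemicontinuous) correspondence with nonempty compact values between topological spaces, and J : F → ℝ continuous. Then the correspondence T*(x) := Argmax_{y∈T(x)} J(y) is upper hemicontinuous with nonempty compact values, and the value function m(x) := max_{y∈T(x)} J(y) is continuous. -/
/-- Upper hemicontinuity of a correspondence. -/
def UpperHemicontinuousCorr {E F : Type*} [TopologicalSpace E] [TopologicalSpace F]
    (T : E → Set F) : Prop :=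
  ∀ x : E, ∀ U : Set F, IsOpen U → T x ⊆ U → ∃ V ∈ nhds x, ∀ z ∈ V, T z ⊆ U

/-- Lower hemicontinuity of a correspondence. -/
def LowerHemicontinuousCorr {E F : Type*} [TopologicalSpace E] [TopologicalSpace F]
    (T : E → Set F) : Prop :=
  ∀ x : E, ∀ U : Set F, IsOpen U → (T x ∩ U).Nonempty → ∃ V ∈ nhds x, ∀ z ∈ V, (T z ∩ U).Nonempty

/-- Berge maximum theorem: if `T` is a continuous correspondence with
nonempty compact values and `J` is continuous, then the argmax correspondence
`T* x = {y ∈ T x : J y = max_{T x} J}` is upper hemicontinuous with nonempty compact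
values, and the value function `m x = max_{y ∈ T x} J y = sSup (J '' T x)` is
continuous. -/
theorem berge_maximum {E F : Type*} [TopologicalSpace E] [TopologicalSpace F]
    (T : E → Set F)
    (huhc : UpperHemicontinuousCorr T) (hlhc : LowerHemicontinuousCorr T)
    (hne : ∀ x, (T x).Nonempty) (hcomp : ∀ x, IsCompact (T x))
    (J : F → ℝ) (hJ : Continuous J) :
    (UpperHemicontinuousCorr (fun x => {y ∈ T x | ∀ z ∈ T x, J z ≤ J y}) ∧
      (∀ x, ({y ∈ T x | ∀ z ∈ T x, J z ≤ J y}).Nonempty) ∧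
      (∀ x, IsCompact {y ∈ T x | ∀ z ∈ T x, J z ≤ J y})) ∧
    Continuous (fun x => sSup (J '' T x)) := by
  set m : E → ℝ := fun x => sSup (J '' T x) with hm
  have hbdd : ∀ x, BddAbove (J '' T x) := fun x => ((hcomp x).image hJ).bddAbove
  have hmem : ∀ x, m x ∈ J '' T x := fun x =>
    ((hcomp x).image hJ).sSup_mem ((hne x).image J)
  have hle : ∀ x, ∀ y ∈ T x, J y ≤ m x := fun x y hy =>
    le_csSup (hbdd x) (Set.mem_image_of_mem J hy)
  have hargne : ∀ x, ({y ∈ T x | ∀ z ∈ T x, J z ≤ J y}).Nonempty := by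
    intro x
    obtain ⟨y, hyT, hyJ⟩ := hmem x
    exact ⟨y, hyT, fun z hz => (hle x z hz).trans hyJ.ge⟩
  have hargcomp : ∀ x, IsCompact {y ∈ T x | ∀ z ∈ T x, J z ≤ J y} := by
    intro x
    have heq : {y ∈ T x | ∀ z ∈ T x, J z ≤ J y} = T x ∩ J ⁻¹' (Set.Ici (m x)) := by
      ext y
      constructor
      · rintro ⟨hyT, hmax⟩
        obtain ⟨w, hwT, hwJ⟩ := hmem x
        exact ⟨hyT, by simp only [Set.mem_preimage, Set.mem_Ici, ← hwJ]; exact hmax w hwT⟩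
      · rintro ⟨hyT, hyJ⟩
        exact ⟨hyT, fun z hz => (hle x z hz).trans hyJ⟩
    rw [heq]
    exact (hcomp x).inter_right (isClosed_Ici.preimage hJ)
  refine ⟨⟨?_, hargne, hargcomp⟩, ?_⟩
  · -- upper hemicontinuity of the argmax correspondence
    intro x U hU hsub
    by_cases hK : (T x \ U).Nonempty
    · have hKcomp : IsCompact (T x \ U) := (hcomp x).diff hU
      obtain ⟨y0, hy0K, hy0J⟩ := (hKcomp.image hJ).sSup_mem (hK.image J)
      have hy0lt : J y0 < m x := by
        have hnot : y0 ∉ {y ∈ T x | ∀ z ∈ T x, J z ≤ J y} := fun h => hy0K.2 (hsub h)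
        have h2 : ¬ ∀ z ∈ T x, J z ≤ J y0 := fun h => hnot ⟨hy0K.1, h⟩
        push_neg at h2
        obtain ⟨z, hzT, hz⟩ := h2
        exact lt_of_lt_of_le hz (hle x z hzT)
      set c := (J y0 + m x) / 2 with hc
      have hc1 : J y0 < c := by rw [hc]; linarith
      have hc2 : c < m x := by rw [hc]; linarith
      have hsub2 : T x ⊆ U ∪ J ⁻¹' (Set.Iio c) := by
        intro y hy
        by_cases hyU : y ∈ U
        · exact Or.inl hyU
        · refine Or.inr ?_
          have hle0 : J y ≤ J y0 :=
            hy0J ▸ le_csSup (hKcomp.image hJ).bddAbove (Set.mem_image_of_mem J ⟨hy, hyU⟩)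
          exact lt_of_le_of_lt hle0 hc1
      obtain ⟨V1, hV1, hV1sub⟩ := huhc x _ (hU.union (isOpen_Iio.preimage hJ)) hsub2
      obtain ⟨w, hwT, hwJ⟩ := hmem x
      obtain ⟨V2, hV2, hV2ne⟩ := hlhc x (J ⁻¹' (Set.Ioi c)) (isOpen_Ioi.preimage hJ)
        ⟨w, hwT, by rw [Set.mem_preimage, Set.mem_Ioi, hwJ]; exact hc2⟩
      refine ⟨V1 ∩ V2, Filter.inter_mem hV1 hV2, ?_⟩
      rintro z ⟨hz1, hz2⟩ y ⟨hyT, hymax⟩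
      obtain ⟨v, hvT, hvc⟩ := hV2ne z hz2
      rw [Set.mem_preimage, Set.mem_Ioi] at hvc
      have hcy : c < J y := lt_of_lt_of_le hvc (hymax v hvT)
      rcases hV1sub z hz1 hyT with h | h
      · exact h
      · rw [Set.mem_preimage, Set.mem_Iio] at h
        linarith
    · have hsub2 : T x ⊆ U := by
        intro y hy
        by_contra h
        exact hK ⟨y, hy, h⟩
      obtain ⟨V, hV, hVsub⟩ := huhc x U hU hsub2
      exact ⟨V, hV, fun z hz y hy => hVsub z hz hy.1⟩
  · -- continuity of the value function
    rw [continuous_iff_continuousAt]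
    intro x
    rw [ContinuousAt, tendsto_order]
    constructor
    · intro a ha
      obtain ⟨w, hwT, hwJ⟩ := hmem x
      obtain ⟨V, hV, hVne⟩ := hlhc x (J ⁻¹' (Set.Ioi a)) (isOpen_Ioi.preimage hJ)
        ⟨w, hwT, by rw [Set.mem_preimage, Set.mem_Ioi, hwJ]; exact ha⟩
      filter_upwards [hV] with z hz
      obtain ⟨v, hvT, hva⟩ := hVne z hz
      rw [Set.mem_preimage, Set.mem_Ioi] at hva
      exact lt_of_lt_of_le hva (hle z v hvT)
    · intro b hb
      have hsub2 : T x ⊆ J ⁻¹' (Set.Iio b) := fun y hy =>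
        lt_of_le_of_lt (hle x y hy) hb
      obtain ⟨V, hV, hVsub⟩ := huhc x _ (isOpen_Iio.preimage hJ) hsub2
      filter_upwards [hV] with z hz
      obtain ⟨y, hyT, hyJ⟩ := hmem z
      have := hVsub z hz hyT
      rw [Set.mem_preimage, Set.mem_Iio] at this
      rwa [hyJ] at this
end

section
/- Approximate selection theorem (Cellina/Horvath form): Let (K,d_K) be a compact metric space and (E,d_E) a convex subset of a normed vector space with the induced metric. Let T : K ⇉ E be an upper hemicontinuous correspondence with nonempty compact convex values. Then for every ε > 0 there exists a continuous function f_ε : K → E such that for all x ∈ K, dist((x, f_ε(x)), Gr(T)) < ε, where the distance on K × E is d_K + d_E. -/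
/-- Cellina/Horvath approximate selection theorem: let `K` be a compact
metric space, `s` a convex subset of a normed vector space `V`, and `T : K ⇉ s` an upper
hemicontinuous correspondence with nonempty compact convex values contained in `s`.
Then for every `ε > 0` there is a continuous `f : K → V` with values in `s` whose graph
is within `ε` of the graph of `T`, for the distance `d_K + d_V` on `K × V`:
for every `x` there are `y ∈ K` and `w ∈ T y` with `dist x y + dist (f x) w < ε`. -/
theorem approximate_selection {K V : Type*} [MetricSpace K] [CompactSpace K]
    [NormedAddCommGroup V] [NormedSpace ℝ V]
    (s : Set V) (hs : Convex ℝ s)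
    (T : K → Set V)
    (hT : UpperHemicontinuousCorr T)
    (hTs : ∀ x, T x ⊆ s)
    (hne : ∀ x, (T x).Nonempty)
    (hcomp : ∀ x, IsCompact (T x))
    (hconv : ∀ x, Convex ℝ (T x))
    (ε : ℝ) (hε : 0 < ε) :
    ∃ f : K → V, Continuous f ∧ (∀ x, f x ∈ s) ∧
      ∀ x : K, ∃ y : K, ∃ w ∈ T y, dist x y + dist (f x) w < ε := by
  classical
  set ε4 := ε / 4 with hε4def
  have hε4pos : 0 < ε4 := by positivity
  -- Step 1: local control radii
  have hstep1 : ∀ x : K, ∃ δ : ℝ, 0 < δ ∧ δ < ε4 ∧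
      ∀ z : K, dist z x < δ → T z ⊆ Metric.thickening ε4 (T x) := by
    intro x
    obtain ⟨Vx, hVx, hVsub⟩ := hT x (Metric.thickening ε4 (T x))
      Metric.isOpen_thickening (Metric.self_subset_thickening hε4pos _)
    obtain ⟨r, hr, hball⟩ := Metric.mem_nhds_iff.mp hVx
    refine ⟨min r (ε4 / 2), lt_min hr (half_pos hε4pos), ?_, ?_⟩
    · exact lt_of_le_of_lt (min_le_right _ _) (by linarith)
    · intro z hz
      exact hVsub z (hball (lt_of_lt_of_le hz (min_le_left _ _)))
  choose δ hδpos hδlt hδ using hstep1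
  -- Step 2: finite subcover
  have hcover : (Set.univ : Set K) ⊆ ⋃ x : K, Metric.ball x (δ x / 2) := by
    intro x _
    exact Set.mem_iUnion.mpr ⟨x, by simpa using (half_pos (hδpos x))⟩
  obtain ⟨t, ht⟩ := isCompact_univ.elim_finite_subcover
    (fun x : K => Metric.ball x (δ x / 2)) (fun x => Metric.isOpen_ball) hcover
  -- selections
  choose w hw using hne
  -- partition of unity
  set g : K → K → ℝ := fun i x => max (δ i / 2 - dist x i) 0 with hgdef
  have hgcont : ∀ i : K, Continuous (fun x => g i x) :=
    fun i => (continuous_const.sub (continuous_id.dist continuous_const)).max continuous_const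
  have hgnonneg : ∀ i x, 0 ≤ g i x := fun i x => le_max_right _ _
  set G : K → ℝ := fun x => ∑ i ∈ t, g i x with hGdef
  have hGcont : Continuous G := continuous_finset_sum _ fun i _ => hgcont i
  have hGpos : ∀ x, 0 < G x := by
    intro x
    obtain ⟨i, hit, hix⟩ := Set.mem_iUnion₂.mp (ht (Set.mem_univ x))
    refine Finset.sum_pos' (fun j _ => hgnonneg j x) ⟨i, hit, ?_⟩
    have : dist x i < δ i / 2 := Metric.mem_ball.mp hix
    simp only [hgdef, lt_max_iff]
    left; linarith
  set f : K → V := fun x => ∑ i ∈ t, (g i x / G x) • w i with hfdef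
  have hfcont : Continuous f := by
    refine continuous_finset_sum _ fun i _ => ?_
    exact (((hgcont i).div hGcont fun x => (hGpos x).ne').smul continuous_const)
  have key : ∀ x : K, f x ∈ s ∧ ∃ y : K, ∃ v ∈ T y, dist x y + dist (f x) v < ε := by
    intro x
    set A := t.filter (fun i => 0 < g i x) with hAdef
    have hAsub : A ⊆ t := Finset.filter_subset _ _
    have hgz : ∀ i ∈ t, i ∉ A → g i x = 0 := by
      intro i hit hiA
      have hnlt : ¬ 0 < g i x := by
        intro h
        exact hiA (Finset.mem_filter.mpr ⟨hit, h⟩)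
      exact le_antisymm (not_lt.mp hnlt) (hgnonneg i x)
    have hfx : f x = ∑ i ∈ A, (g i x / G x) • w i :=
      (Finset.sum_subset hAsub (fun i hit hiA => by simp [hgz i hit hiA])).symm
    have hwsum : ∑ i ∈ A, g i x / G x = 1 := by
      have h1 : ∑ i ∈ t, g i x / G x = 1 := by
        rw [← Finset.sum_div]
        exact div_self (hGpos x).ne'
      rw [← h1]
      exact Finset.sum_subset hAsub (fun i hit hiA => by simp [hgz i hit hiA])
    have hwnn : ∀ i ∈ A, 0 ≤ g i x / G x :=
      fun i _ => div_nonneg (hgnonneg i x) (hGpos x).le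
    have hAdist : ∀ i ∈ A, dist x i < δ i / 2 := by
      intro i hi
      have h2 := (Finset.mem_filter.mp hi).2
      rcases lt_max_iff.mp h2 with h | h
      · linarith
      · exact absurd h (lt_irrefl 0)
    have hAne : A.Nonempty := by
      obtain ⟨i, hit, hix⟩ := Set.mem_iUnion₂.mp (ht (Set.mem_univ x))
      have : dist x i < δ i / 2 := Metric.mem_ball.mp hix
      exact ⟨i, Finset.mem_filter.mpr ⟨hit, lt_max_iff.mpr (Or.inl (by linarith))⟩⟩
    obtain ⟨j, hjA, hjmax⟩ := A.exists_max_image δ hAne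
    have hfs : f x ∈ s := by
      rw [hfx]
      exact hs.sum_mem hwnn hwsum (fun i _ => hTs i (hw i))
    have hthick : ∀ i ∈ A, w i ∈ Metric.thickening ε4 (T j) := by
      intro i hi
      have h1 : dist x i < δ i / 2 := hAdist i hi
      have h2 : dist x j < δ j / 2 := hAdist j hjA
      have h3 : dist i j < δ j := by
        calc dist i j ≤ dist i x + dist x j := dist_triangle _ _ _
          _ < δ i / 2 + δ j / 2 := by rw [dist_comm i x]; linarith
          _ ≤ δ j := by have := hjmax i hi; linarith
      exact hδ j i h3 (hw i)
    have hfthick : f x ∈ Metric.thickening ε4 (T j) := by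
      rw [hfx]
      exact ((hconv j).thickening ε4).sum_mem hwnn hwsum hthick
    obtain ⟨v, hv, hdv⟩ := Metric.mem_thickening_iff.mp hfthick
    refine ⟨hfs, j, v, hv, ?_⟩
    have h2 : dist x j < δ j / 2 := hAdist j hjA
    have h3 := hδlt j
    rw [hε4def] at h3 hdv
    linarith
  exact ⟨f, hfcont, fun x => (key x).1, fun x => (key x).2⟩
end

section
/- Stable convergence and conditional expectations over a finite partition: Let (ℙₖ) be probability measures on a product 𝒳 × 𝒲 of Polish spaces converging weakly to ℙ, all with the same second marginal 𝕎 on 𝒲. Let {S_I} be a finite Borel partition of 𝒲 with 𝕎(S_I) > 0 for each I. Then for every bounded continuous φ : 𝒳 → ℝ, the simple functions ω ↦ Σ_I (E^{ℙₖ}[φ(X) 1_{S_I}(W)] / 𝕎(S_I)) 1_{S_I}(ω) converge 𝕎-a.s. to ω ↦ Σ_I (E^{ℙ}[φ(X) 1_{S_I}(W)] / 𝕎(S_I)) 1_{S_I}(ω). -/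
open MeasureTheory Filter

variable {𝒳 𝒲 : Type*} [MetricSpace 𝒳] [PolishSpace 𝒳] [MetricSpace 𝒲] [PolishSpace 𝒲]

noncomputable instance borelXX : MeasurableSpace 𝒳 := borel 𝒳
instance : BorelSpace 𝒳 := ⟨rfl⟩
noncomputable instance borelWW : MeasurableSpace 𝒲 := borel 𝒲
instance : BorelSpace 𝒲 := ⟨rfl⟩

set_option linter.unusedSectionVars false in
lemma stable_key
    (Pk : ℕ → ProbabilityMeasure (𝒳 × 𝒲)) (P : ProbabilityMeasure (𝒳 × 𝒲))
    (W : ProbabilityMeasure 𝒲)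
    (hconv : Tendsto Pk atTop (nhds P))
    (hmargk : ∀ k, (Pk k : Measure (𝒳 × 𝒲)).map Prod.snd = (W : Measure 𝒲))
    (hmarg : (P : Measure (𝒳 × 𝒲)).map Prod.snd = (W : Measure 𝒲))
    (s : Set 𝒲) (hs : MeasurableSet s) (φ : BoundedContinuousFunction 𝒳 ℝ) :
    Tendsto (fun k => ∫ p, φ p.1 * s.indicator (fun _ => (1:ℝ)) p.2 ∂(Pk k : Measure (𝒳 × 𝒲)))
      atTop (nhds (∫ p, φ p.1 * s.indicator (fun _ => (1:ℝ)) p.2 ∂(P : Measure (𝒳 × 𝒲)))) := by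
  rw [Metric.tendsto_atTop]
  intro ε hε
  set M : ℝ := ‖φ‖ + 1 with hM
  have hM0 : 0 < M := by positivity
  have hφM : ∀ x, |φ x| ≤ M := fun x => le_trans (φ.norm_coe_le_norm x) (by simp [hM])
  -- approximate indicator in L¹(W)
  have hind : Integrable (s.indicator (fun _ => (1:ℝ))) (W : Measure 𝒲) :=
    (integrable_const 1).indicator hs
  obtain ⟨g, hgapprox, hgint⟩ :=
    hind.exists_boundedContinuous_integral_sub_le (μ := (W : Measure 𝒲))
      (ε := ε / (3 * M)) (by positivity)
  -- the product bounded continuous function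
  let F : BoundedContinuousFunction (𝒳 × 𝒲) ℝ :=
    (φ.compContinuous ⟨Prod.fst, continuous_fst⟩) * (g.compContinuous ⟨Prod.snd, continuous_snd⟩)
  have hFconv := ProbabilityMeasure.tendsto_iff_forall_integral_tendsto.mp hconv F
  rw [Metric.tendsto_atTop] at hFconv
  obtain ⟨N, hN⟩ := hFconv (ε / 3) (by positivity)
  refine ⟨N, fun k hk => ?_⟩
  -- estimates
  have key : ∀ (Q : ProbabilityMeasure (𝒳 × 𝒲)),
      (Q : Measure (𝒳 × 𝒲)).map Prod.snd = (W : Measure 𝒲) →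
      |∫ p, φ p.1 * s.indicator (fun _ => (1:ℝ)) p.2 ∂(Q : Measure (𝒳 × 𝒲))
        - ∫ p, F p ∂(Q : Measure (𝒳 × 𝒲))| ≤ M * (ε / (3 * M)) := by
    intro Q hQ
    have hmeas_ind : AEStronglyMeasurable
        (fun p : 𝒳 × 𝒲 => s.indicator (fun _ => (1:ℝ)) p.2) (Q : Measure (𝒳 × 𝒲)) := by
      exact ((measurable_const.indicator hs).comp measurable_snd).aestronglyMeasurable
    have hint1 : Integrable (fun p : 𝒳 × 𝒲 => φ p.1 * s.indicator (fun _ => (1:ℝ)) p.2)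
        (Q : Measure (𝒳 × 𝒲)) := by
      apply Integrable.bdd_mul ?_ (φ.continuous.comp continuous_fst).aestronglyMeasurable
        (c := ‖φ‖) (Filter.Eventually.of_forall fun x => φ.norm_coe_le_norm x.1)
      have : (fun p : 𝒳 × 𝒲 => s.indicator (fun _ => (1:ℝ)) p.2)
          = (Prod.snd ⁻¹' s).indicator (fun _ => (1:ℝ)) := by
        ext p; by_cases hp : p.2 ∈ s <;> simp [Set.indicator, hp]
      rw [this]
      exact (integrable_const 1).indicator (measurable_snd hs)
    have hint2 : Integrable (fun p : 𝒳 × 𝒲 => F p) (Q : Measure (𝒳 × 𝒲)) := F.integrable _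
    rw [← integral_sub hint1 hint2]
    have hFval : ∀ p : 𝒳 × 𝒲, F p = φ p.1 * g p.2 := fun p => rfl
    calc |∫ p, (φ p.1 * s.indicator (fun _ => (1:ℝ)) p.2 - F p) ∂(Q : Measure (𝒳 × 𝒲))|
        ≤ ∫ p, |φ p.1 * s.indicator (fun _ => (1:ℝ)) p.2 - F p| ∂(Q : Measure (𝒳 × 𝒲)) :=
          by simpa [Real.norm_eq_abs] using
            norm_integral_le_integral_norm
              (fun p : 𝒳 × 𝒲 => φ p.1 * s.indicator (fun _ => (1:ℝ)) p.2 - F p)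
      _ ≤ ∫ p, M * |s.indicator (fun _ => (1:ℝ)) p.2 - g p.2| ∂(Q : Measure (𝒳 × 𝒲)) := by
          apply integral_mono_of_nonneg (Filter.Eventually.of_forall fun p => abs_nonneg _)
          · apply Integrable.const_mul
            have : Integrable (fun p : 𝒳 × 𝒲 => s.indicator (fun _ => (1:ℝ)) p.2 - g p.2)
                (Q : Measure (𝒳 × 𝒲)) := by
              apply Integrable.sub
              · have : (fun p : 𝒳 × 𝒲 => s.indicator (fun _ => (1:ℝ)) p.2)
                    = (Prod.snd ⁻¹' s).indicator (fun _ => (1:ℝ)) := by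
                  ext p; by_cases hp : p.2 ∈ s <;> simp [Set.indicator, hp]
                rw [this]
                exact (integrable_const 1).indicator (measurable_snd hs)
              · exact (g.compContinuous ⟨Prod.snd, continuous_snd⟩).integrable _
            exact this.abs
          · apply Filter.Eventually.of_forall
            intro p
            dsimp only
            rw [hFval p, ← mul_sub, abs_mul]
            exact mul_le_mul_of_nonneg_right (hφM p.1) (abs_nonneg _)
      _ = M * ∫ p, |s.indicator (fun _ => (1:ℝ)) p.2 - g p.2| ∂(Q : Measure (𝒳 × 𝒲)) :=
          integral_const_mul _ _
      _ = M * ∫ w, |s.indicator (fun _ => (1:ℝ)) w - g w| ∂(W : Measure 𝒲) := by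
          rw [← hQ, integral_map measurable_snd.aemeasurable]
          exact (((measurable_const.indicator hs).sub
            g.continuous.measurable).abs).aestronglyMeasurable
      _ ≤ M * (ε / (3 * M)) := by
          apply mul_le_mul_of_nonneg_left _ hM0.le
          calc ∫ w, |s.indicator (fun _ => (1:ℝ)) w - g w| ∂(W : Measure 𝒲)
              = ∫ w, ‖s.indicator (fun _ => (1:ℝ)) w - g w‖ ∂(W : Measure 𝒲) := by
                simp [Real.norm_eq_abs]
            _ ≤ ε / (3 * M) := hgapprox
  have hMe : M * (ε / (3 * M)) = ε / 3 := by field_simp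
  have h1 := key (Pk k) (hmargk k)
  have h2 := key P hmarg
  have h3 := hN k hk
  rw [Real.dist_eq] at h3 ⊢
  have t1 := abs_sub_le
    (∫ p, φ p.1 * s.indicator (fun _ => (1:ℝ)) p.2 ∂(Pk k : Measure (𝒳 × 𝒲)))
    (∫ p, F p ∂(Pk k : Measure (𝒳 × 𝒲)))
    (∫ p, φ p.1 * s.indicator (fun _ => (1:ℝ)) p.2 ∂(P : Measure (𝒳 × 𝒲)))
  have t2 := abs_sub_le
    (∫ p, F p ∂(Pk k : Measure (𝒳 × 𝒲)))
    (∫ p, F p ∂(P : Measure (𝒳 × 𝒲)))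
    (∫ p, φ p.1 * s.indicator (fun _ => (1:ℝ)) p.2 ∂(P : Measure (𝒳 × 𝒲)))
  rw [abs_sub_comm] at h2
  linarith

/-- stable convergence and conditional expectations over a finite
partition: let `(ℙₖ)` be probability measures on `𝒳 × 𝒲` converging weakly to `ℙ`,
all with the same second marginal `𝕎`, and let `(S_I)_{I ∈ ι}` be a finite measurable
partition of `𝒲` with `𝕎(S_I) > 0`. Then for every bounded continuous `φ : 𝒳 → ℝ`
the simple functions `w ↦ Σ_I (E^{ℙₖ}[φ(X) 1_{S_I}(W)] / 𝕎(S_I)) 1_{S_I}(w)` converge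
`𝕎`-a.s. to the corresponding function built from `ℙ`. -/
theorem stable_convergence_conditional_expectation
    (Pk : ℕ → ProbabilityMeasure (𝒳 × 𝒲)) (P : ProbabilityMeasure (𝒳 × 𝒲))
    (W : ProbabilityMeasure 𝒲)
    (hconv : Tendsto Pk atTop (nhds P))
    (hmargk : ∀ k, (Pk k : Measure (𝒳 × 𝒲)).map Prod.snd = (W : Measure 𝒲))
    (hmarg : (P : Measure (𝒳 × 𝒲)).map Prod.snd = (W : Measure 𝒲))
    (ι : Type*) [Fintype ι]
    (S : ι → Set 𝒲) (hSmeas : ∀ I, MeasurableSet (S I))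
    (hSdisj : Pairwise (Function.onFun Disjoint S))
    (hScover : (⋃ I, S I) = Set.univ)
    (hSpos : ∀ I, 0 < ((W : Measure 𝒲) (S I)).toReal)
    (φ : BoundedContinuousFunction 𝒳 ℝ) :
    ∀ᵐ w ∂(W : Measure 𝒲),
      Tendsto (fun k => ∑ I : ι,
          ((∫ p, φ p.1 * (S I).indicator (fun _ => (1:ℝ)) p.2 ∂(Pk k : Measure (𝒳 × 𝒲))) /
            ((W : Measure 𝒲) (S I)).toReal) * (S I).indicator (fun _ => (1:ℝ)) w)
        atTop
        (nhds (∑ I : ι,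
          ((∫ p, φ p.1 * (S I).indicator (fun _ => (1:ℝ)) p.2 ∂(P : Measure (𝒳 × 𝒲))) /
            ((W : Measure 𝒲) (S I)).toReal) * (S I).indicator (fun _ => (1:ℝ)) w)) := by
  apply Filter.Eventually.of_forall
  intro w
  apply tendsto_finset_sum
  intro I _
  exact ((stable_key Pk P W hconv hmargk hmarg (S I) (hSmeas I) φ).div_const _).mul_const _
end
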